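/- arXiv:2111.00218 — 3 statements merged into one kernel-verified Lean document; each statement's English description precedes it below -/
import Mathlib

section
/- If a relation → on a set X is semiconfluent modulo an equivalence ≡ (i.e., for all x, y, y' with x → y and x →* y' there exist z, z' with y →* z, y' →* z', and z ≡ z'), and ≡ is a bisimulation for →, then → is confluent modulo ≡ (i.e., for all x, y, y' with x →* y and x →* y' there exist z, z' with y →* z, y' →* z', and z ≡ z'). -/
lemma bisim_star {X : Type*} {r e : X → X → Prop}
    (hbisim : ∀ x x' y, e x x' → r x y → ∃ y', r x' y' ∧ e y y') :
    ∀ x x' y, e x x' → Relation.ReflTransGen r x y →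
      ∃ y', Relation.ReflTransGen r x' y' ∧ e y y' := by
  intro x x' y hxx' hxy
  induction hxy with
  | refl => exact ⟨x', .refl, hxx'⟩
  | tail _ hbc ih =>
    obtain ⟨b', hb', hbb'⟩ := ih
    obtain ⟨c', hc', hcc'⟩ := hbisim _ _ _ hbb' hbc
    exact ⟨c', hb'.tail hc', hcc'⟩

/-- semiconfluence modulo an equivalence that is a bisimulation
implies confluence modulo that equivalence. -/
theorem semiconfluent_modulo_implies_confluent_modulo
    {X : Type*} (r : X → X → Prop) (e : X → X → Prop)
    (heq : Equivalence e)
    (hbisim : ∀ x x' y, e x x' → r x y → ∃ y', r x' y' ∧ e y y')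
    (hsemi : ∀ x y y', r x y → Relation.ReflTransGen r x y' →
      ∃ z z', Relation.ReflTransGen r y z ∧ Relation.ReflTransGen r y' z' ∧ e z z') :
    ∀ x y y', Relation.ReflTransGen r x y → Relation.ReflTransGen r x y' →
      ∃ z z', Relation.ReflTransGen r y z ∧ Relation.ReflTransGen r y' z' ∧ e z z' := by
  intro x y y' hxy hxy'
  induction hxy using Relation.ReflTransGen.head_induction_on generalizing y' with
  | refl => exact ⟨y', y', hxy', .refl, heq.refl _⟩
  | head hxa hay ih =>
    obtain ⟨z1, z1', haz1, hy'z1', hz1⟩ := hsemi _ _ _ hxa hxy'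
    obtain ⟨w, w', hyw, hz1w', hww'⟩ := ih _ haz1
    obtain ⟨w'', hz1'w'', hw'w''⟩ := bisim_star hbisim _ _ _ hz1 hz1w'
    exact ⟨w, w'', hyw, hy'z1'.trans hz1'w'', heq.trans hww' hw'w''⟩
end

section
/- If a term t (with variables) has the unique matching property (at most one substitution σ with σ(t) = t' for any ground t'), then nondeterministic existential evaluation over single-fact patterns with t is deterministic: for any ground multiset F, either every complete run of the iterated-matching existential procedure returns true, or every complete run returns false. -/
/-- A complete run of the iterated-matching existential procedure over the
single-fact pattern `[t]?`, abstracted by the instantiation map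
`inst : Subst → Fact` (`inst σ = σ(t)`) and a deterministic Boolean body
`eval : Subst → Bool`: repeatedly pick a fact `g` in the iterator state and a
substitution `σ` with `inst σ = g`; if the body evaluates to `true`, return
`true`; otherwise remove `g` and continue; return `false` when no match
remains. -/
inductive ExistRun {Fact Subst : Type*} [DecidableEq Fact]
    (inst : Subst → Fact) (eval : Subst → Bool) : Multiset Fact → Bool → Prop
  | found {F : Multiset Fact} {σ : Subst} :
      inst σ ∈ F → eval σ = true → ExistRun inst eval F true
  | skip {F : Multiset Fact} {σ : Subst} {b : Bool} :
      inst σ ∈ F → eval σ = false →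
      ExistRun inst eval (F.erase (inst σ)) b → ExistRun inst eval F b
  | exhausted {F : Multiset Fact} :
      (¬ ∃ σ : Subst, inst σ ∈ F) → ExistRun inst eval F false

/-- if the pattern fact has the unique matching property (at most
one substitution produces any given ground fact), then the nondeterministic
existential procedure is deterministic in its result: on any multiset, either
every complete run returns `true`, or every complete run returns `false`. -/
theorem existRun_deterministic_of_unique_matching
    {Fact Subst : Type*} [DecidableEq Fact]
    (inst : Subst → Fact) (eval : Subst → Bool)
    (huniq : ∀ σ σ' : Subst, inst σ = inst σ' → σ = σ') :
    ∀ F : Multiset Fact,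
      (∀ b, ExistRun inst eval F b → b = true) ∨
      (∀ b, ExistRun inst eval F b → b = false) := by
  have key : ∀ {F : Multiset Fact} {b : Bool}, ExistRun inst eval F b →
      (b = true ↔ ∃ σ : Subst, inst σ ∈ F ∧ eval σ = true) := by
    intro F b h
    induction h with
    | found hmem heval => exact ⟨fun _ => ⟨_, hmem, heval⟩, fun _ => rfl⟩
    | @skip F σ b hmem heval _ ih =>
      rw [ih]
      constructor
      · rintro ⟨σ', hmem', heval'⟩
        exact ⟨σ', Multiset.mem_of_mem_erase hmem', heval'⟩
      · rintro ⟨σ', hmem', heval'⟩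
        refine ⟨σ', ?_, heval'⟩
        have hne : inst σ' ≠ inst σ := fun h => by
          have := huniq σ' σ h; subst this; simp [heval'] at heval
        exact Multiset.mem_erase_of_ne hne |>.mpr hmem'
    | exhausted hno =>
      simp only [Bool.false_eq_true, false_iff]
      rintro ⟨σ, hmem, _⟩
      exact hno ⟨σ, hmem⟩
  intro F
  by_cases h : ∃ σ : Subst, inst σ ∈ F ∧ eval σ = true
  · left; intro b hb; exact (key hb).mpr h
  · right; intro b hb
    cases b with
    | false => rfl
    | true => exact absurd ((key hb).mp rfl) h
end

section
/- If a condition φ evaluates deterministically (unique Boolean outcome on each database), then (φ ⇒ Q₁) ⊕ (φ ⇒ Q₂) is equivalent to φ ⇒ (Q₁ ⊕ Q₂); however, without determinism of φ, the implication only holds in one direction: every result of φ ⇒ (Q₁ ⊕ Q₂) is a possible result of (φ ⇒ Q₁) ⊕ (φ ⇒ Q₂), and there exist φ, Q₁, Q₂, F witnessing failure of the converse. -/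
/-- Abstract nondeterministic semantics of queries with conditionals `φ ⇒ Q`
and union `⊕`, over conditions with nondeterministic Boolean evaluation. -/
structure CondQuerySem (Fact Cond Query : Type) where
  /-- `φ` can evaluate to `B` on `F`. -/
  CanEval : Cond → Multiset Fact → Bool → Prop
  /-- `Q` can return `F'` when evaluated against `F`. -/
  CanReturn : Query → Multiset Fact → Multiset Fact → Prop
  /-- Conditional query `φ ⇒ Q`. -/
  cond : Cond → Query → Query
  /-- Union of queries `Q₁ ⊕ Q₂`. -/
  union : Query → Query → Query
  /-- Every condition admits at least one outcome on every database. -/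
  total : ∀ φ F, ∃ B, CanEval φ F B
  cond_ne : ∀ φ Q F F', F' ≠ 0 →
    (CanReturn (cond φ Q) F F' ↔ CanEval φ F true ∧ CanReturn Q F F')
  cond_emp : ∀ φ Q F,
    CanReturn (cond φ Q) F 0 ↔ CanEval φ F false ∨ CanReturn Q F 0
  union_iff : ∀ Q₁ Q₂ F F', CanReturn (union Q₁ Q₂) F F' ↔
    ∃ F₁ F₂, F' = F₁ + F₂ ∧ CanReturn Q₁ F F₁ ∧ CanReturn Q₂ F F₂

/-- helper: `cond φ Q` can return `F'` provided `Q` can and `CanEval φ F true`. -/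
lemma cond_ret {Fact Cond Query : Type} (S : CondQuerySem Fact Cond Query)
    (φ : Cond) (Q : Query) (F F' : Multiset Fact)
    (ht : S.CanEval φ F true) (h : S.CanReturn Q F F') :
    S.CanReturn (S.cond φ Q) F F' := by
  by_cases h0 : F' = 0
  · subst h0; exact (S.cond_emp φ Q F).2 (Or.inr h)
  · exact (S.cond_ne φ Q F F' h0).2 ⟨ht, h⟩

/-- The counterexample semantics: queries are sets of possible results,
conditions always evaluate nondeterministically to both values. -/
def badSem : CondQuerySem Unit Unit (Set (Multiset Unit)) where
  CanEval := fun _ _ _ => True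
  CanReturn := fun Q _ F' => F' ∈ Q
  cond := fun _ Q => Q ∪ {0}
  union := fun Q₁ Q₂ => {F' | ∃ F₁ F₂, F' = F₁ + F₂ ∧ F₁ ∈ Q₁ ∧ F₂ ∈ Q₂}
  total := fun _ _ => ⟨true, trivial⟩
  cond_ne := by
    intro φ Q F F' h
    simp only [Set.mem_union, Set.mem_singleton_iff, h, or_false, true_and]
  cond_emp := by
    intro φ Q F
    simp
  union_iff := fun _ _ _ _ => Iff.rfl

/-- if `φ` evaluates deterministically then
`(φ ⇒ Q₁) ⊕ (φ ⇒ Q₂) ≡ φ ⇒ (Q₁ ⊕ Q₂)`; without determinism only one direction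
holds — every possible result of `φ ⇒ (Q₁ ⊕ Q₂)` is a possible result of
`(φ ⇒ Q₁) ⊕ (φ ⇒ Q₂)` — and there is a witness (a semantics together with
`φ, Q₁, Q₂, F, F'`) showing the converse direction fails in general. -/
theorem cond_distributes_over_union_iff_deterministic :
    (∀ (Fact Cond Query : Type) (S : CondQuerySem Fact Cond Query)
        (φ : Cond) (Q₁ Q₂ : Query),
      (∀ F F', S.CanReturn (S.cond φ (S.union Q₁ Q₂)) F F' →
        S.CanReturn (S.union (S.cond φ Q₁) (S.cond φ Q₂)) F F') ∧
      ((∀ F, ¬ (S.CanEval φ F true ∧ S.CanEval φ F false)) →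
        ∀ F F', S.CanReturn (S.union (S.cond φ Q₁) (S.cond φ Q₂)) F F' ↔
          S.CanReturn (S.cond φ (S.union Q₁ Q₂)) F F')) ∧
    (∃ (Fact Cond Query : Type) (S : CondQuerySem Fact Cond Query)
        (φ : Cond) (Q₁ Q₂ : Query) (F F' : Multiset Fact),
      S.CanReturn (S.union (S.cond φ Q₁) (S.cond φ Q₂)) F F' ∧
      ¬ S.CanReturn (S.cond φ (S.union Q₁ Q₂)) F F') := by
  constructor
  · intro Fact Cond Query S φ Q₁ Q₂
    have fwd : ∀ F F', S.CanReturn (S.cond φ (S.union Q₁ Q₂)) F F' →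
        S.CanReturn (S.union (S.cond φ Q₁) (S.cond φ Q₂)) F F' := by
      intro F F' h
      by_cases h0 : F' = 0
      · subst h0
        rcases (S.cond_emp φ _ F).1 h with hf | hu
        · exact (S.union_iff _ _ F 0).2 ⟨0, 0, by simp,
            (S.cond_emp φ Q₁ F).2 (Or.inl hf), (S.cond_emp φ Q₂ F).2 (Or.inl hf)⟩
        · rcases (S.union_iff Q₁ Q₂ F 0).1 hu with ⟨F₁, F₂, heq, h1, h2⟩
          obtain ⟨h1', h2'⟩ : F₁ = 0 ∧ F₂ = 0 := by
            simpa [add_eq_zero_iff_of_nonneg] using heq.symm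
          subst h1'; subst h2'
          exact (S.union_iff _ _ F 0).2 ⟨0, 0, by simp,
            (S.cond_emp φ Q₁ F).2 (Or.inr h1), (S.cond_emp φ Q₂ F).2 (Or.inr h2)⟩
      · obtain ⟨ht, hu⟩ := (S.cond_ne φ _ F F' h0).1 h
        rcases (S.union_iff Q₁ Q₂ F F').1 hu with ⟨F₁, F₂, heq, h1, h2⟩
        exact (S.union_iff _ _ F F').2 ⟨F₁, F₂, heq,
          cond_ret S φ Q₁ F F₁ ht h1, cond_ret S φ Q₂ F F₂ ht h2⟩
    refine ⟨fwd, fun hdet F F' => ⟨?_, fwd F F'⟩⟩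
    intro h
    rcases (S.union_iff _ _ F F').1 h with ⟨F₁, F₂, heq, h1, h2⟩
    by_cases h10 : F₁ = 0 <;> by_cases h20 : F₂ = 0
    · subst h10; subst h20
      have hF' : F' = 0 := by simpa using heq
      subst hF'
      rcases (S.cond_emp φ Q₁ F).1 h1 with hf | hq1
      · exact (S.cond_emp φ _ F).2 (Or.inl hf)
      · rcases (S.cond_emp φ Q₂ F).1 h2 with hf | hq2
        · exact (S.cond_emp φ _ F).2 (Or.inl hf)
        · exact (S.cond_emp φ _ F).2 (Or.inr
            ((S.union_iff Q₁ Q₂ F 0).2 ⟨0, 0, by simp, hq1, hq2⟩))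
    · obtain ⟨ht, hq2⟩ := (S.cond_ne φ Q₂ F F₂ h20).1 h2
      subst h10
      have hq1 : S.CanReturn Q₁ F 0 := by
        rcases (S.cond_emp φ Q₁ F).1 h1 with hf | hq1
        · exact absurd ⟨ht, hf⟩ (hdet F)
        · exact hq1
      exact cond_ret S φ _ F F' ht
        ((S.union_iff Q₁ Q₂ F F').2 ⟨0, F₂, heq, hq1, hq2⟩)
    · obtain ⟨ht, hq1⟩ := (S.cond_ne φ Q₁ F F₁ h10).1 h1
      subst h20
      have hq2 : S.CanReturn Q₂ F 0 := by
        rcases (S.cond_emp φ Q₂ F).1 h2 with hf | hq2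
        · exact absurd ⟨ht, hf⟩ (hdet F)
        · exact hq2
      exact cond_ret S φ _ F F' ht
        ((S.union_iff Q₁ Q₂ F F').2 ⟨F₁, 0, heq, hq1, hq2⟩)
    · obtain ⟨ht, hq1⟩ := (S.cond_ne φ Q₁ F F₁ h10).1 h1
      obtain ⟨_, hq2⟩ := (S.cond_ne φ Q₂ F F₂ h20).1 h2
      exact cond_ret S φ _ F F' ht
        ((S.union_iff Q₁ Q₂ F F').2 ⟨F₁, F₂, heq, hq1, hq2⟩)
  · refine ⟨Unit, Unit, Set (Multiset Unit), badSem, (), {({()} : Multiset Unit)},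
      {({()} : Multiset Unit)}, 0, {()}, ?_, ?_⟩
    · exact ⟨{()}, 0, by simp [badSem], by simp [badSem], by simp [badSem]⟩
    · intro h
      rcases h with h | h
      · rcases h with ⟨F₁, F₂, heq, h1, h2⟩
        simp only [badSem, Set.mem_singleton_iff] at h1 h2
        subst h1; subst h2
        have := congrArg Multiset.card heq
        simp at this
      · simp [badSem] at h
end
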